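/- (Key step in Theorem 2) Let (γ̂, x̂, σ̂) be a Γ-equilibrium and let principal m deviate to a mechanism γ^m ∈ Γ^m whose assigned transfer schedules are independent of agents' messages and whose range over principal m's own messages is all of T^m. Then principal m's continuation-equilibrium payoff under (γ^m, γ̂^{-m}) with play (x̂, σ̂) is at least sup_{t^m ∈ T^m} min_{s ∈ Ŝ(t^{-m}, t^m)} [G^m(s) − Σ_{n∈N} t_n^m(s_n)], where t^{-m} denotes the profile of transfer schedules assigned by the non-deviating principals' mechanisms γ̂^{-m} under the continuation communication x̂; in particular this payoff is at least V̲^m. -/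

import Mathlib

open scoped Classical
open Finset

noncomputable section

namespace CMGamma

/-- A profile of transfer schedules of one principal: a nonnegative payment
schedule for each agent. -/
def Sched (N : Type*) (S : N → Type*) : Type _ := ∀ n : N, S n → NNReal

/-- A mechanism of a principal with own-message set `Com0` and agents' message sets
`Com`: transfer schedules for the agents as a function of the principal's own message
and the agents' messages. -/
def Mech (N : Type*) (S : N → Type*) (Com0 : Type*) (Com : N → Type*) : Type _ :=
  ∀ n : N, (Com0 × ∀ i : N, Com i) → S n → NNReal

/-- A profile of mechanisms, one for each principal. -/
abbrev MechProfile (M N : Type*) (S : N → Type*) (C0 : M → Type*)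
    (C : M → N → Type*) : Type _ :=
  ∀ m : M, Mech N S (C0 m) (C m)

/-- Agents' communication strategies: a message to each principal given the observed
profile of mechanisms. -/
abbrev AgentComm (M N : Type*) (S : N → Type*) (C0 : M → Type*)
    (C : M → N → Type*) : Type _ :=
  ∀ n : N, MechProfile M N S C0 C → ∀ m : M, C m n

/-- Principals' self-communication strategies: a message to oneself given one's own
mechanism. -/
abbrev PrinComm (M N : Type*) (S : N → Type*) (C0 : M → Type*)
    (C : M → N → Type*) : Type _ :=
  ∀ m : M, Mech N S (C0 m) (C m) → C0 m

/-- Agents' action strategies: an action given the profile of mechanisms, the agent's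
own messages, and the assigned transfer schedules. -/
abbrev ActStrat (M N : Type*) (S : N → Type*) (C0 : M → Type*)
    (C : M → N → Type*) : Type _ :=
  ∀ n : N, MechProfile M N S C0 C → (∀ m : M, C m n) → (M → Sched N S) → S n

variable {M N : Type*} [Fintype M] [Fintype N] [DecidableEq M] [DecidableEq N]
variable {S : N → Type*} [∀ n, Fintype (S n)] [∀ n, Nonempty (S n)]
variable {C0 : M → Type*} {C : M → N → Type*}

/-- The schedules assigned to the agents given the mechanisms and communication
strategies. -/
def assigned (gam : MechProfile M N S C0 C) (xA : AgentComm M N S C0 C)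
    (x0 : PrinComm M N S C0 C) : M → Sched N S :=
  fun m n => gam m n (x0 m (gam m), fun i => xA i gam m)

/-- The action profile induced by the strategies. -/
def act (gam : MechProfile M N S C0 C) (xA : AgentComm M N S C0 C)
    (x0 : PrinComm M N S C0 C) (sig : ActStrat M N S C0 C) : ∀ n, S n :=
  fun n => sig n gam (xA n gam) (assigned gam xA x0)

/-- Principal `m`'s net payoff. -/
def V (G : M → (∀ n, S n) → ℝ) (gam : MechProfile M N S C0 C)
    (xA : AgentComm M N S C0 C) (x0 : PrinComm M N S C0 C)
    (sig : ActStrat M N S C0 C) (m : M) : ℝ :=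
  G m (act gam xA x0 sig) - ∑ n, (assigned gam xA x0 m n (act gam xA x0 sig n) : ℝ)

/-- Condition 1: agents' actions are optimal given any assigned schedules. -/
def ActOpt (F : ∀ n : N, S n → ℝ) (sig : ActStrat M N S C0 C) : Prop :=
  ∀ (n : N) (gam : MechProfile M N S C0 C) (cn : ∀ m : M, C m n)
    (t : M → Sched N S) (s' : S n),
    F n s' + ∑ m, (t m n s' : ℝ) ≤
      F n (sig n gam cn t) + ∑ m, (t m n (sig n gam cn t) : ℝ)

/-- Agent `n`'s continuation payoff when she unilaterally sends the messages `cn`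
while the other agents and the principals follow `(xA, x0)`. -/
def agentPayoff (F : ∀ n : N, S n → ℝ) (sig : ActStrat M N S C0 C)
    (gam : MechProfile M N S C0 C) (xA : AgentComm M N S C0 C)
    (x0 : PrinComm M N S C0 C) (n : N) (cn : ∀ m : M, C m n) : ℝ :=
  let t : M → Sched N S :=
    fun m i => gam m i (x0 m (gam m), Function.update (fun j => xA j gam m) n (cn m));
  F n (sig n gam cn t) + ∑ m, (t m n (sig n gam cn t) : ℝ)

/-- Condition 2: each agent's message profile is a best response given the others'
messages and the induced schedules and continuation actions. -/
def MsgOpt (F : ∀ n : N, S n → ℝ) (sig : ActStrat M N S C0 C)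
    (xA : AgentComm M N S C0 C) (x0 : PrinComm M N S C0 C) : Prop :=
  ∀ (n : N) (gam : MechProfile M N S C0 C) (cn : ∀ m : M, C m n),
    agentPayoff F sig gam xA x0 n cn ≤ agentPayoff F sig gam xA x0 n (xA n gam)

/-- Principal `m`'s net payoff when he sends the message `c0` to himself while all
other players follow their strategies. -/
def prinPayoffAt (G : M → (∀ n, S n) → ℝ) (gam : MechProfile M N S C0 C)
    (xA : AgentComm M N S C0 C) (x0 : PrinComm M N S C0 C)
    (sig : ActStrat M N S C0 C) (m : M) (c0 : C0 m) : ℝ :=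
  let t : M → Sched N S :=
    Function.update (assigned gam xA x0) m fun i => gam m i (c0, fun j => xA j gam m);
  G m (fun n => sig n gam (xA n gam) t) - ∑ n, (t m n (sig n gam (xA n gam) t) : ℝ)

/-- Condition 3: each principal's self-message is optimal given his mechanism and the
others' strategies, for any mechanism he may offer. -/
def SelfOpt (G : M → (∀ n, S n) → ℝ) (Gam : ∀ m : M, Set (Mech N S (C0 m) (C m)))
    (gamhat : MechProfile M N S C0 C) (xA : AgentComm M N S C0 C)
    (x0 : PrinComm M N S C0 C) (sig : ActStrat M N S C0 C) : Prop :=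
  ∀ (m : M), ∀ gm ∈ Gam m, ∀ c0 : C0 m,
    prinPayoffAt G (Function.update gamhat m gm) xA x0 sig m c0 ≤
      prinPayoffAt G (Function.update gamhat m gm) xA x0 sig m (x0 m gm)

/-- Condition 4: no principal gains by unilaterally replacing his mechanism with any
other mechanism in `Γ^m`. -/
def MechOpt (G : M → (∀ n, S n) → ℝ) (Gam : ∀ m : M, Set (Mech N S (C0 m) (C m)))
    (gamhat : MechProfile M N S C0 C) (xA : AgentComm M N S C0 C)
    (x0 : PrinComm M N S C0 C) (sig : ActStrat M N S C0 C) : Prop :=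
  ∀ (m : M), ∀ gm ∈ Gam m,
    V G (Function.update gamhat m gm) xA x0 sig m ≤ V G gamhat xA x0 sig m

/-- Γ-equilibrium. -/
def GammaEq (G : M → (∀ n, S n) → ℝ) (F : ∀ n : N, S n → ℝ)
    (Gam : ∀ m : M, Set (Mech N S (C0 m) (C m))) (gamhat : MechProfile M N S C0 C)
    (xA : AgentComm M N S C0 C) (x0 : PrinComm M N S C0 C)
    (sig : ActStrat M N S C0 C) : Prop :=
  (∀ m, gamhat m ∈ Gam m) ∧ ActOpt F sig ∧ MsgOpt F sig xA x0 ∧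
    SelfOpt G Gam gamhat xA x0 sig ∧ MechOpt G Gam gamhat xA x0 sig

/-- The set `Ŝ(t)` of agents' jointly optimal action profiles given transfer schedules. -/
def Shat (F : ∀ n : N, S n → ℝ) (t : M → Sched N S) : Set (∀ n, S n) :=
  {s | ∀ (n : N) (s' : S n),
    F n s' + ∑ m, (t m n s' : ℝ) ≤ F n (s n) + ∑ m, (t m n (s n) : ℝ)}

/-- Principal `m`'s worst net payoff over agents' optimal action profiles. -/
def worst (G : M → (∀ n, S n) → ℝ) (F : ∀ n : N, S n → ℝ) (m : M)
    (t : M → Sched N S) : ℝ :=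
  sInf ((fun s => G m s - ∑ n, (t m n (s n) : ℝ)) '' Shat F t)

/-- The inner supremum over principal `m`'s own transfer schedules, the other
principals' schedules being fixed. -/
def innerSup (G : M → (∀ n, S n) → ℝ) (F : ∀ n : N, S n → ℝ) (m : M)
    (t : M → Sched N S) : ℝ :=
  sSup {v | ∃ tm : Sched N S, v = worst G F m (Function.update t m tm)}

/-- Principal `m`'s minmax value `V̲^m`. -/
def minmax (G : M → (∀ n, S n) → ℝ) (F : ∀ n : N, S n → ℝ) (m : M) : ℝ :=
  sInf {v | ∃ t : M → Sched N S, v = innerSup G F m t}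

/-- Agent maximization. -/
def AM (F : ∀ n : N, S n → ℝ) (s : ∀ n, S n) (d : M → N → NNReal) : Prop :=
  ∃ t : M → Sched N S, s ∈ Shat F t ∧ ∀ m n, d m n = t m n (s n)

/-- Principal individual rationality. -/
def PIR (G : M → (∀ n, S n) → ℝ) (F : ∀ n : N, S n → ℝ) (s : ∀ n, S n)
    (d : M → N → NNReal) : Prop :=
  ∀ m : M, minmax G F m ≤ G m s - ∑ n, (d m n : ℝ)

/-- The constant mechanism that assigns the schedules `w` regardless of messages. -/
def constMech {Com0 : Type*} {Com : N → Type*} (w : Sched N S) :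
    Mech N S Com0 Com :=
  fun n _ => w n

/-- The profile of mechanisms in which principal `m` offers `gm` while every other
principal `j ≠ m` offers the constant mechanism assigning the punishment schedules
`t̃^{j,m} = ttil m j`. -/
def punProfile (ttil : M → M → Sched N S) (m : M) (gm : Mech N S (C0 m) (C m)) :
    MechProfile M N S C0 C :=
  Function.update (fun j => constMech (ttil m j)) m gm

/-- A mechanism of principal `m` is flexible if its assigned transfer schedules are
independent of the agents' messages and its range over the principal's own messages is
all of `T^m`. -/
def Flexible {m : M} (gm : Mech N S (C0 m) (C m)) : Prop :=
  (∀ (n : N) (c0 : C0 m) (ca ca' : ∀ i : N, C m i), gm n (c0, ca) = gm n (c0, ca')) ∧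
  ∀ tm : Sched N S, ∃ c0 : C0 m, ∀ (n : N) (ca : ∀ i : N, C m i), gm n (c0, ca) = tm n

/-- The DRM-like mechanism of principal `m` constructed from injections
`φ n : M ∪ {0} → C m n`: it assigns the punishment schedules `tp j` if some `j ≠ m` is
reported by strictly more than `N/2` agents, the zero schedules if two distinct reports
`≠ m` are each sent by exactly `N/2` agents, and the no-deviation schedules `tb`
otherwise, independently of the principal's own message. -/
def drmLike (m : M) (phi : ∀ n : N, Option M → C m n) (tb : Sched N S)
    (tp : M → Sched N S) : Mech N S (C0 m) (C m) :=
  fun n c =>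
    if h : ∃ j : M, j ≠ m ∧
        Fintype.card N < 2 * (Finset.univ.filter fun i => c.2 i = phi i (some j)).card then
      tp h.choose n
    else if ∃ v v' : Option M, v ≠ v' ∧ v ≠ some m ∧ v' ≠ some m ∧
        2 * (Finset.univ.filter fun i => c.2 i = phi i v).card = Fintype.card N ∧
        2 * (Finset.univ.filter fun i => c.2 i = phi i v').card = Fintype.card N then
      fun _ => 0
    else tb n

/-- The game relative to `Γ` is regular: (i) each agent's message set for each
principal is at least as large as `M ∪ {0}`; (ii) there exist communication strategies
satisfying the agents' message-optimality and the principals' self-message-optimality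
conditions, such that each principal's self-message is also optimal against the
punishment profile `(γ^m, γ̃^{-m})`, where the agents' action strategy selects, after
`(γ^m, γ̃^{-m})` and any resulting schedules `(t^m, t̃^{-m,m})`, a profile in
`Ŝ(t^m, t̃^{-m,m})` minimizing principal `m`'s net payoff. -/
def Regular (G : M → (∀ n, S n) → ℝ) (F : ∀ n : N, S n → ℝ)
    (Gam : ∀ m : M, Set (Mech N S (C0 m) (C m))) (ttil : M → M → Sched N S) : Prop :=
  (∀ (m : M) (n : N), ∃ phi : Option M → C m n, Function.Injective phi) ∧
  ∃ (xA : AgentComm M N S C0 C) (x0 : PrinComm M N S C0 C) (sig : ActStrat M N S C0 C),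
    ActOpt F sig ∧ MsgOpt F sig xA x0 ∧
    (∀ gamhat : MechProfile M N S C0 C, SelfOpt G Gam gamhat xA x0 sig) ∧
    (∀ (m : M), ∀ gm ∈ Gam m, ∀ c0 : C0 m,
      prinPayoffAt G (punProfile ttil m gm) xA x0 sig m c0 ≤
        prinPayoffAt G (punProfile ttil m gm) xA x0 sig m (x0 m gm)) ∧
    (∀ (m : M), ∀ gm ∈ Gam m, ∀ (cn : ∀ n : N, ∀ m' : M, C m' n) (tm : Sched N S),
      ∀ s' ∈ Shat F (Function.update (ttil m) m tm),
        G m (fun n => sig n (punProfile ttil m gm) (cn n) (Function.update (ttil m) m tm)) -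
            ∑ n, (tm n (sig n (punProfile ttil m gm) (cn n)
              (Function.update (ttil m) m tm)) : ℝ) ≤
          G m s' - ∑ n, (tm n (s' n) : ℝ))

lemma shat_nonempty (F : ∀ n : N, S n → ℝ) (t : M → Sched N S) :
    (Shat F t).Nonempty := by
  have h : ∀ n : N, ∃ sn : S n, ∀ s' : S n,
      F n s' + ∑ m, (t m n s' : ℝ) ≤ F n sn + ∑ m, (t m n sn : ℝ) := by
    intro n
    obtain ⟨sn, -, hsn⟩ := Finset.exists_max_image Finset.univ
      (fun s' : S n => F n s' + ∑ m, (t m n s' : ℝ)) ⟨Classical.arbitrary _, Finset.mem_univ _⟩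
    exact ⟨sn, fun s' => hsn s' (Finset.mem_univ _)⟩
  choose s hs using h
  exact ⟨s, fun n s' => hs n s'⟩

lemma worst_le_of_mem (G : M → (∀ n, S n) → ℝ) (F : ∀ n : N, S n → ℝ) (m : M)
    (t : M → Sched N S) {s : ∀ n, S n} (hs : s ∈ Shat F t) :
    worst G F m t ≤ G m s - ∑ n, (t m n (s n) : ℝ) := by
  refine csInf_le ((Set.Finite.image _ (Set.toFinite (Shat F t))).bddBelow) ?_
  exact ⟨s, hs, rfl⟩

lemma lb_le_worst (G : M → (∀ n, S n) → ℝ) (F : ∀ n : N, S n → ℝ) (m : M)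
    (t : M → Sched N S) :
    (Finset.univ.inf' Finset.univ_nonempty (G m)) ≤
      worst G F m (Function.update t m (fun _ _ => 0)) := by
  refine le_csInf ((shat_nonempty F _).image _) ?_
  rintro v ⟨s, -, rfl⟩
  have h0 : (Function.update t m (fun _ _ => (0 : NNReal))) m = fun _ _ => 0 :=
    Function.update_self _ _ _
  have : ∑ n, ((Function.update t m (fun _ _ => (0 : NNReal))) m n (s n) : ℝ) = 0 := by
    rw [h0]; simp
  dsimp only
  rw [this, sub_zero]
  exact Finset.inf'_le _ (Finset.mem_univ s)

lemma worst_le_ub (G : M → (∀ n, S n) → ℝ) (F : ∀ n : N, S n → ℝ) (m : M)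
    (t : M → Sched N S) :
    worst G F m t ≤ Finset.univ.sup' Finset.univ_nonempty (G m) := by
  obtain ⟨s, hs⟩ := shat_nonempty F t
  calc worst G F m t ≤ G m s - ∑ n, (t m n (s n) : ℝ) := worst_le_of_mem G F m t hs
    _ ≤ G m s := by
        have : (0 : ℝ) ≤ ∑ n, (t m n (s n) : ℝ) :=
          Finset.sum_nonneg fun _ _ => NNReal.coe_nonneg _
        linarith
    _ ≤ _ := Finset.le_sup' _ (Finset.mem_univ s)

lemma lb_le_innerSup (G : M → (∀ n, S n) → ℝ) (F : ∀ n : N, S n → ℝ) (m : M)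
    (t : M → Sched N S) :
    (Finset.univ.inf' Finset.univ_nonempty (G m)) ≤ innerSup G F m t := by
  have hbdd : BddAbove {v | ∃ tm : Sched N S, v = worst G F m (Function.update t m tm)} := by
    refine ⟨Finset.univ.sup' Finset.univ_nonempty (G m), ?_⟩
    rintro v ⟨tm, rfl⟩
    exact worst_le_ub G F m _
  calc (Finset.univ.inf' Finset.univ_nonempty (G m))
      ≤ worst G F m (Function.update t m (fun _ _ => 0)) := lb_le_worst G F m t
    _ ≤ innerSup G F m t := le_csSup hbdd ⟨fun _ _ => 0, rfl⟩

lemma prinPayoffAt_x0 (G : M → (∀ n, S n) → ℝ) (gam : MechProfile M N S C0 C)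
    (xA : AgentComm M N S C0 C) (x0 : PrinComm M N S C0 C)
    (sig : ActStrat M N S C0 C) (m : M) :
    prinPayoffAt G gam xA x0 sig m (x0 m (gam m)) = V G gam xA x0 sig m := by
  have ht : Function.update (assigned gam xA x0) m
      (fun i => gam m i (x0 m (gam m), fun j => xA j gam m)) = assigned gam xA x0 := by
    funext j
    rcases eq_or_ne j m with rfl | h
    · exact (Function.update_self _ _ _).trans rfl
    · exact Function.update_of_ne h _ _
  simp only [prinPayoffAt, V, act, ht]
  rfl

/-- **Key step in Theorem 2.** Let `(γ̂, x̂, x̂₀, σ̂)` be a Γ-equilibrium and let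
principal `m` deviate to a flexible mechanism `γ^m ∈ Γ^m` (message-independent with
full range over his own messages). Then his continuation-equilibrium payoff under
`(γ^m, γ̂^{-m})` is at least `sup_{t^m} min_{s ∈ Ŝ(t^{-m}, t^m)} [G^m(s) − Σ_n t_n^m(s_n)]`,
where `t^{-m}` is the profile of schedules assigned by the non-deviators' mechanisms
under the continuation communication; in particular it is at least `V̲^m`. -/
theorem key_step_theorem2
    (G : M → (∀ n, S n) → ℝ) (F : ∀ n : N, S n → ℝ)
    (hM : 2 ≤ Fintype.card M) (hN : 2 ≤ Fintype.card N)
    (Gam : ∀ m : M, Set (Mech N S (C0 m) (C m)))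
    (gamhat : MechProfile M N S C0 C) (xA : AgentComm M N S C0 C)
    (x0 : PrinComm M N S C0 C) (sig : ActStrat M N S C0 C)
    (heq : GammaEq G F Gam gamhat xA x0 sig)
    (m : M) (gm : Mech N S (C0 m) (C m)) (hgm : gm ∈ Gam m) (hflex : Flexible gm) :
    innerSup G F m (assigned (Function.update gamhat m gm) xA x0) ≤
        V G (Function.update gamhat m gm) xA x0 sig m ∧
      minmax G F m ≤ V G (Function.update gamhat m gm) xA x0 sig m := by
  set gam' := Function.update gamhat m gm with hgam'
  set t := assigned gam' xA x0 with hT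
  have hgm' : gam' m = gm := Function.update_self m gm gamhat
  -- Step A: for every tm, worst ≤ V
  have stepA : ∀ tm : Sched N S,
      worst G F m (Function.update t m tm) ≤ V G gam' xA x0 sig m := by
    intro tm
    obtain ⟨c0, hc0⟩ := hflex.2 tm
    -- the schedules assigned when principal m sends c0
    set t' := Function.update (assigned gam' xA x0) m
      (fun i => gam' m i (c0, fun j => xA j gam' m)) with ht'
    have ht'eq : t' = Function.update t m tm := by
      funext j
      rcases eq_or_ne j m with rfl | h
      · rw [ht', Function.update_self]
        refine (Function.update_self _ _ _).trans ?_
        funext i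
        rw [hgm']
        exact hc0 i _
      · rw [ht', Function.update_of_ne h]
        exact Function.update_of_ne h _ _
    set s' : ∀ n, S n := fun n => sig n gam' (xA n gam') t' with hs'
    have hmem : s' ∈ Shat F t' := by
      intro n sn
      exact heq.2.1 n gam' (xA n gam') t' sn
    have h1 : worst G F m t' ≤ G m s' - ∑ n, (t' m n (s' n) : ℝ) :=
      worst_le_of_mem G F m t' hmem
    have h2 : G m s' - ∑ n, (t' m n (s' n) : ℝ) =
        prinPayoffAt G gam' xA x0 sig m c0 := rfl
    have h3 : prinPayoffAt G gam' xA x0 sig m c0 ≤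
        prinPayoffAt G gam' xA x0 sig m (x0 m gm) := heq.2.2.2.1 m gm hgm c0
    have h4 : prinPayoffAt G gam' xA x0 sig m (x0 m gm) = V G gam' xA x0 sig m := by
      have := prinPayoffAt_x0 G gam' xA x0 sig m
      rwa [hgm'] at this
    rw [← ht'eq]
    linarith [h1, h3, h4.le, h2.ge]
  have hpart1 : innerSup G F m t ≤ V G gam' xA x0 sig m := by
    refine csSup_le ⟨worst G F m (Function.update t m (t m)), t m, rfl⟩ ?_
    rintro v ⟨tm, rfl⟩
    exact stepA tm
  refine ⟨hpart1, ?_⟩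
  have hbb : BddBelow {v | ∃ tt : M → Sched N S, v = innerSup G F m tt} := by
    refine ⟨Finset.univ.inf' Finset.univ_nonempty (G m), ?_⟩
    rintro v ⟨tt, rfl⟩
    exact lb_le_innerSup G F m tt
  have hmin : minmax G F m ≤ innerSup G F m t := csInf_le hbb ⟨t, rfl⟩
  exact hmin.trans hpart1

end CMGamma

end
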